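/- Let ι be a finite type, and for each i ∈ ι let m i and k i be nonempty finite types with decidable equality; let τ : ∀ i, Matrix (k i) (k i) ℂ be positive definite matrices of trace 1. Set d := card (Σ i, (m i × k i)) and σTr := Matrix.blockDiagonal' (fun i => ((card (k i) : ℝ)/d) • (1 ⊗ₖ τ i)). Let ρ be a positive definite matrix of trace 1 on Σ i, (m i × k i), and define ρ_N := Matrix.blockDiagonal' (fun i => R_i ⊗ₖ τ i), where R_i(a,a') := Σ_b ρ(⟨i,(a,b)⟩, ⟨i,(a',b)⟩). Then ρ_N and σTr are positive definite of trace 1, and D(ρ‖ρ_N) = D(ρ‖σTr) − D(ρ_N‖σTr). -/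

import Mathlib

/-!
Write `ρ_N = ⊕ᵢ Rᵢ ⊗ τᵢ`, where `Rᵢ` is the partial trace over `k i` of the `i`-th diagonal block
of `ρ`, and note that `σ_Tr` is the decoherence of the maximally mixed state `d⁻¹ • 1`. The
logarithm of a block-diagonal matrix is taken blockwise and `log (A ⊗ B) = log A ⊗ 1 + 1 ⊗ log B`
(diagonalise with the block-diagonal, resp. Kronecker, product of the eigenvector unitaries), so
`log ρ_N - log σ_Tr = ⊕ᵢ Xᵢ ⊗ 1` for some `Xᵢ`. Since `Tr τᵢ = 1`, the matrices `ρ` and `ρ_N`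
have the same partial traces `Rᵢ`, hence the same trace against any `⊕ᵢ Xᵢ ⊗ 1`, namely
`∑ᵢ Tr (Rᵢ Xᵢ)`. Thus `Tr ρ (log ρ_N - log σ_Tr) = D(ρ_N‖σ_Tr)`, which is the claimed identity.
-/

open Matrix Kronecker
open scoped ComplexOrder

/-- matrix logarithm via the continuous functional calculus -/
noncomputable def mlog {n : Type*} [Fintype n] [DecidableEq n] (A : Matrix n n ℂ) :
    Matrix n n ℂ := cfc Real.log A

/-- quantum relative entropy `D(ρ‖σ) = Re Tr[ρ (log ρ − log σ)]` -/
noncomputable def relEnt {n : Type*} [Fintype n] [DecidableEq n]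
    (ρ σ : Matrix n n ℂ) : ℝ := (Matrix.trace (ρ * (mlog ρ - mlog σ))).re

section Blocks

variable {ι : Type*} [Fintype ι] [DecidableEq ι]
  {m k : ι → Type*} [∀ i, Fintype (m i)] [∀ i, Fintype (k i)]
  [∀ i, DecidableEq (m i)] [∀ i, DecidableEq (k i)]

/-- the reference state `σ_Tr` -/
noncomputable def sigmaTr (τ : ∀ i, Matrix (k i) (k i) ℂ) :
    Matrix (Σ i, (m i × k i)) (Σ i, (m i × k i)) ℂ :=
  Matrix.blockDiagonal' fun i =>
    ((Fintype.card (k i) : ℝ) / (Fintype.card (Σ i, (m i × k i)) : ℝ)) •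
      ((1 : Matrix (m i) (m i) ℂ) ⊗ₖ τ i)

/-- the decohered state `ρ_N = E_{N*}(ρ)` -/
noncomputable def decohered (τ : ∀ i, Matrix (k i) (k i) ℂ)
    (ρ : Matrix (Σ i, (m i × k i)) (Σ i, (m i × k i)) ℂ) :
    Matrix (Σ i, (m i × k i)) (Σ i, (m i × k i)) ℂ :=
  Matrix.blockDiagonal' fun i =>
    (Matrix.of fun a a' => ∑ b, ρ ⟨i, (a, b)⟩ ⟨i, (a', b)⟩) ⊗ₖ τ i

end Blocks

open Unitary

namespace Matrix

variable {𝕜 n : Type*} [RCLike 𝕜] [DecidableEq n]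

lemma isSelfAdjoint_diagonal_ofReal (d : n → ℝ) :
    IsSelfAdjoint (diagonal (RCLike.ofReal ∘ d : n → 𝕜)) := by
  simp [IsSelfAdjoint, star_eq_conjTranspose, diagonal_conjTranspose, Function.comp_def]

variable [Fintype n]

lemma continuousOn_spectrum_real (f : ℝ → ℝ) (A : Matrix n n 𝕜) :
    ContinuousOn f (spectrum ℝ A) := by
  -- the spectrum is finite, hence discrete
  rw [continuousOn_iff_continuous_domRestrict]
  fun_prop

lemma mem_spectrum_diagonal_ofReal (d : n → ℝ) (i : n) :
    d i ∈ spectrum ℝ (diagonal (RCLike.ofReal ∘ d : n → 𝕜)) := by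
  rw [← spectrum.algebraMap_mem_iff 𝕜, spectrum_diagonal]
  exact ⟨i, rfl⟩

noncomputable def diagonalCfcHom (d : n → ℝ) :
    C(spectrum ℝ (diagonal (RCLike.ofReal ∘ d : n → 𝕜)), ℝ) →⋆ₐ[ℝ] Matrix n n 𝕜 where
  toFun g := diagonal (RCLike.ofReal ∘ g ∘ fun i ↦ ⟨d i, mem_spectrum_diagonal_ofReal d i⟩)
  map_zero' := by simp [Pi.zero_def, Function.comp_def]
  map_one' := by simp [Pi.one_def, Function.comp_def]
  map_mul' f g := by simp [diagonal_mul_diagonal, Function.comp_def]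
  map_add' f g := by simp [diagonal_add, Function.comp_def]
  commutes' r := by simp [algebraMap_eq_diagonal, Function.comp_def, Pi.algebraMap_def]
  map_star' f := by simp [star_eq_conjTranspose, diagonal_conjTranspose, Function.comp_def]

lemma cfc_diagonal (f : ℝ → ℝ) (d : n → ℝ) :
    cfc f (diagonal (RCLike.ofReal ∘ d : n → 𝕜)) = diagonal (RCLike.ofReal ∘ f ∘ d) := by
  have hd := isSelfAdjoint_diagonal_ofReal (𝕜 := 𝕜) d
  have hcont : Continuous (diagonalCfcHom (𝕜 := 𝕜) d) :=
    Continuous.matrix_diagonal <| continuous_pi fun i ↦ by fun_prop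
  rw [cfc_apply f _ hd (continuousOn_spectrum_real f _),
    cfcHom_eq_of_continuous_of_map_id hd (diagonalCfcHom d) hcont rfl]
  rfl

lemma cfc_conjStarAlgAut_diagonal (f : ℝ → ℝ) (U : unitary (Matrix n n 𝕜)) (d : n → ℝ) :
    cfc f (conjStarAlgAut 𝕜 _ U (diagonal (RCLike.ofReal ∘ d))) =
      conjStarAlgAut 𝕜 _ U (diagonal (RCLike.ofReal ∘ f ∘ d)) := by
  have hcont : Continuous (conjStarAlgAut 𝕜 _ U) :=
    (continuous_const.matrix_mul continuous_id).matrix_mul continuous_const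
  rw [← cfc_diagonal, StarAlgHomClass.map_cfc (conjStarAlgAut 𝕜 _ U) f _
    (continuousOn_spectrum_real f _) hcont (isSelfAdjoint_diagonal_ofReal d)
    ((isSelfAdjoint_diagonal_ofReal d).map _)]

section blockDiagonal

variable {ι : Type*} [Fintype ι] [DecidableEq ι] {s : ι → Type*}
  [∀ i, Fintype (s i)] [∀ i, DecidableEq (s i)]

lemma blockDiagonal'_mem_unitary {U : ∀ i, Matrix (s i) (s i) 𝕜}
    (hU : ∀ i, U i ∈ unitary (Matrix (s i) (s i) 𝕜)) :
    blockDiagonal' U ∈ unitary (Matrix (Σ i, s i) (Σ i, s i) 𝕜) := by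
  rw [Unitary.mem_iff, star_eq_conjTranspose, blockDiagonal'_conjTranspose,
    ← blockDiagonal'_mul, ← blockDiagonal'_mul, ← blockDiagonal'_one]
  simp only [← star_eq_conjTranspose, Unitary.star_mul_self_of_mem (hU _),
    Unitary.mul_star_self_of_mem (hU _), and_self]
  rfl

lemma blockDiagonal'_conjStarAlgAut_diagonal (U : ∀ i, unitary (Matrix (s i) (s i) 𝕜))
    (d : ∀ i, s i → ℝ) :
    blockDiagonal' (fun i ↦ conjStarAlgAut 𝕜 _ (U i) (diagonal (RCLike.ofReal ∘ d i))) =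
      conjStarAlgAut 𝕜 _ ⟨blockDiagonal' fun i ↦ (U i : Matrix (s i) (s i) 𝕜),
        blockDiagonal'_mem_unitary fun i ↦ (U i).2⟩
        (diagonal (RCLike.ofReal ∘ fun x : Σ i, s i ↦ d x.1 x.2)) := by
  have hdiag : diagonal (RCLike.ofReal ∘ fun x : Σ i, s i ↦ d x.1 x.2) =
      blockDiagonal' fun i ↦ diagonal (RCLike.ofReal ∘ d i : s i → 𝕜) :=
    (blockDiagonal'_diagonal fun i ↦ RCLike.ofReal ∘ d i).symm
  rw [hdiag]
  simp only [conjStarAlgAut_apply, star_eq_conjTranspose, blockDiagonal'_conjTranspose,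
    blockDiagonal'_mul]

lemma cfc_blockDiagonal' (f : ℝ → ℝ) {A : ∀ i, Matrix (s i) (s i) 𝕜}
    (hA : ∀ i, (A i).IsHermitian) :
    cfc f (blockDiagonal' A) = blockDiagonal' fun i ↦ cfc f (A i) := by
  conv_lhs => rw [funext fun i ↦ (hA i).spectral_theorem]
  simp_rw [(hA _).cfc_eq, IsHermitian.cfc]
  rw [blockDiagonal'_conjStarAlgAut_diagonal, blockDiagonal'_conjStarAlgAut_diagonal,
    cfc_conjStarAlgAut_diagonal]
  rfl

lemma posDef_blockDiagonal' {A : ∀ i, Matrix (s i) (s i) 𝕜} (hA : ∀ i, (A i).PosDef) :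
    (blockDiagonal' A).PosDef := by
  rw [funext fun i ↦ (hA i).1.spectral_theorem, blockDiagonal'_conjStarAlgAut_diagonal,
    conjStarAlgAut_apply, IsUnit.posDef_star_right_conjugate_iff isUnit_coe]
  exact PosDef.diagonal fun x ↦ by simpa using (hA x.1).eigenvalues_pos x.2

end blockDiagonal

section kronecker

variable {p q : Type*} [Fintype p] [DecidableEq p] [Fintype q] [DecidableEq q]

lemma conjStarAlgAut_kronecker (U : unitary (Matrix p p 𝕜)) (V : unitary (Matrix q q 𝕜))
    (A : Matrix p p 𝕜) (B : Matrix q q 𝕜) :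
    conjStarAlgAut 𝕜 _ ⟨(U : Matrix p p 𝕜) ⊗ₖ (V : Matrix q q 𝕜),
        kronecker_mem_unitary U.2 V.2⟩ (A ⊗ₖ B) =
      conjStarAlgAut 𝕜 _ U A ⊗ₖ conjStarAlgAut 𝕜 _ V B := by
  simp only [conjStarAlgAut_apply, star_eq_conjTranspose, conjTranspose_kronecker,
    mul_kronecker_mul]

lemma cfc_log_kronecker {A : Matrix p p 𝕜} {B : Matrix q q 𝕜} (hA : A.PosDef) (hB : B.PosDef) :
    cfc Real.log (A ⊗ₖ B) = cfc Real.log A ⊗ₖ 1 + 1 ⊗ₖ cfc Real.log B := by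
  have hdiag (e : p → ℝ) (e' : q → ℝ) : diagonal (RCLike.ofReal ∘ e : p → 𝕜) ⊗ₖ
      diagonal (RCLike.ofReal ∘ e') = diagonal (RCLike.ofReal ∘ fun x ↦ e x.1 * e' x.2) := by
    rw [diagonal_kronecker_diagonal]
    simp [Function.comp_def]
  have hlog : diagonal (RCLike.ofReal ∘ Real.log ∘
        fun x : p × q ↦ hA.1.eigenvalues x.1 * hB.1.eigenvalues x.2) =
      diagonal (RCLike.ofReal ∘ Real.log ∘ hA.1.eigenvalues : p → 𝕜) ⊗ₖ 1 +
        1 ⊗ₖ diagonal (RCLike.ofReal ∘ Real.log ∘ hB.1.eigenvalues) := by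
    rw [← diagonal_one, ← diagonal_one, diagonal_kronecker_diagonal, diagonal_kronecker_diagonal,
      diagonal_add]
    congr 1
    funext x
    simp [Real.log_mul (hA.eigenvalues_pos x.1).ne' (hB.eigenvalues_pos x.2).ne']
  conv_lhs => rw [hA.1.spectral_theorem, hB.1.spectral_theorem]
  rw [← conjStarAlgAut_kronecker, hdiag, cfc_conjStarAlgAut_diagonal, hA.1.cfc_eq, hB.1.cfc_eq,
    IsHermitian.cfc, IsHermitian.cfc, hlog, map_add]
  simp only [conjStarAlgAut_kronecker, map_one]

end kronecker

end Matrix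

lemma relEnt_eq_sub_of_trace_mul_eq {n : Type*} [Fintype n] [DecidableEq n]
    {ρ ρ' σ : Matrix n n ℂ}
    (h : trace (ρ * (mlog ρ' - mlog σ)) = trace (ρ' * (mlog ρ' - mlog σ))) :
    relEnt ρ ρ' = relEnt ρ σ - relEnt ρ' σ := by
  rw [relEnt, relEnt, relEnt, ← Complex.sub_re, ← h, ← trace_sub, ← mul_sub,
    sub_sub_sub_cancel_right]

section Decoherence

variable {ι : Type*} {m k : ι → Type*} [∀ i, Fintype (k i)]

def blockPartialTrace {α : Type*} [AddCommMonoid α]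
    (ρ : Matrix (Σ i, m i × k i) (Σ i, m i × k i) α) (i : ι) : Matrix (m i) (m i) α :=
  Matrix.of fun a a' ↦ ∑ b, ρ ⟨i, (a, b)⟩ ⟨i, (a', b)⟩

lemma posDef_blockPartialTrace {𝕜 : Type*} [RCLike 𝕜] [∀ i, Nonempty (k i)]
    {ρ : Matrix (Σ i, m i × k i) (Σ i, m i × k i) 𝕜} (hρ : ρ.PosDef) (i : ι) :
    (blockPartialTrace ρ i).PosDef := by
  have hsum : blockPartialTrace ρ i =
      ∑ b, ρ.submatrix (fun a ↦ ⟨i, (a, b)⟩) (fun a ↦ ⟨i, (a, b)⟩) := by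
    ext a a'
    simp [blockPartialTrace, Matrix.sum_apply]
  rw [hsum]
  exact posDef_sum Finset.univ_nonempty fun b _ ↦
    hρ.submatrix (sigma_mk_injective.comp (Prod.mk_left_injective b))

variable [DecidableEq ι]

lemma decohered_eq_blockDiagonal' (τ : ∀ i, Matrix (k i) (k i) ℂ)
    (ρ : Matrix (Σ i, m i × k i) (Σ i, m i × k i) ℂ) :
    decohered τ ρ = blockDiagonal' fun i ↦ blockPartialTrace ρ i ⊗ₖ τ i :=
  rfl

lemma blockPartialTrace_decohered {τ : ∀ i, Matrix (k i) (k i) ℂ} (hτ : ∀ i, trace (τ i) = 1)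
    (ρ : Matrix (Σ i, m i × k i) (Σ i, m i × k i) ℂ) (i : ι) :
    blockPartialTrace (decohered τ ρ) i = blockPartialTrace ρ i := by
  ext a a'
  simp [decohered_eq_blockDiagonal', blockPartialTrace, ← Finset.mul_sum,
    show ∀ i, ∑ b, τ i b b = 1 from hτ]

variable [Fintype ι] [∀ i, Fintype (m i)] [∀ i, DecidableEq (k i)]

lemma trace_mul_blockDiagonal'_kronecker_one {α : Type*} [Semiring α]
    (ρ : Matrix (Σ i, m i × k i) (Σ i, m i × k i) α) (X : ∀ i, Matrix (m i) (m i) α) :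
    trace (ρ * blockDiagonal' fun i ↦ X i ⊗ₖ (1 : Matrix (k i) (k i) α)) =
      ∑ i, trace (blockPartialTrace ρ i * X i) := by
  simp only [trace, diag, mul_apply, Fintype.sum_sigma, Fintype.sum_prod_type,
    blockDiagonal'_apply, kroneckerMap_apply, one_apply, blockPartialTrace, of_apply,
    Finset.sum_mul, mul_dite, mul_zero, Finset.sum_dite_irrel, Finset.sum_const_zero,
    Finset.sum_dite_eq', Finset.mem_univ, if_true, cast_eq, mul_ite, mul_one, Finset.sum_ite_eq']
  exact Finset.sum_congr rfl fun i _ ↦ Finset.sum_congr rfl fun a _ ↦ by rw [Finset.sum_comm]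

variable [∀ i, DecidableEq (m i)]

lemma trace_eq_sum_trace_blockPartialTrace {α : Type*} [Semiring α]
    (ρ : Matrix (Σ i, m i × k i) (Σ i, m i × k i) α) :
    trace ρ = ∑ i, trace (blockPartialTrace ρ i) := by
  have h := trace_mul_blockDiagonal'_kronecker_one ρ fun _ ↦ 1
  simp only [one_kronecker_one, mul_one] at h
  rwa [show (blockDiagonal' fun i ↦ (1 : Matrix (m i × k i) (m i × k i) α)) = 1 from
    blockDiagonal'_one, mul_one] at h

lemma trace_decohered {τ : ∀ i, Matrix (k i) (k i) ℂ} (hτ : ∀ i, trace (τ i) = 1)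
    (ρ : Matrix (Σ i, m i × k i) (Σ i, m i × k i) ℂ) :
    trace (decohered τ ρ) = trace ρ := by
  simp_rw [trace_eq_sum_trace_blockPartialTrace (decohered τ ρ), blockPartialTrace_decohered hτ,
    ← trace_eq_sum_trace_blockPartialTrace]

lemma posDef_decohered [∀ i, Nonempty (k i)] {τ : ∀ i, Matrix (k i) (k i) ℂ}
    (hτ : ∀ i, (τ i).PosDef) {ρ : Matrix (Σ i, m i × k i) (Σ i, m i × k i) ℂ} (hρ : ρ.PosDef) :
    (decohered τ ρ).PosDef :=
  posDef_blockDiagonal' fun i ↦ (posDef_blockPartialTrace hρ i).kronecker (hτ i)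

lemma mlog_decohered [∀ i, Nonempty (k i)] {τ : ∀ i, Matrix (k i) (k i) ℂ}
    (hτ : ∀ i, (τ i).PosDef) {ρ : Matrix (Σ i, m i × k i) (Σ i, m i × k i) ℂ} (hρ : ρ.PosDef) :
    mlog (decohered τ ρ) = blockDiagonal' fun i ↦
      mlog (blockPartialTrace ρ i) ⊗ₖ 1 + 1 ⊗ₖ mlog (τ i) := by
  rw [decohered_eq_blockDiagonal', mlog,
    cfc_blockDiagonal' _ fun i ↦ ((posDef_blockPartialTrace hρ i).kronecker (hτ i)).1]
  exact congrArg _ <| funext fun i ↦ cfc_log_kronecker (posDef_blockPartialTrace hρ i) (hτ i)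

lemma sigmaTr_eq_decohered (τ : ∀ i, Matrix (k i) (k i) ℂ) :
    sigmaTr τ = decohered τ
      ((Fintype.card (Σ i, m i × k i) : ℝ)⁻¹ • (1 : Matrix (Σ i, m i × k i) _ ℂ)) := by
  refine congrArg blockDiagonal' <| funext fun i ↦ ?_
  rw [← smul_kronecker]
  congr 1
  ext a a'
  simp [one_apply, div_eq_mul_inv]

lemma relEnt_decohered_eq_sub [∀ i, Nonempty (k i)] {τ : ∀ i, Matrix (k i) (k i) ℂ}
    (hτ : ∀ i, (τ i).PosDef) (hτtr : ∀ i, trace (τ i) = 1)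
    {ρ ω : Matrix (Σ i, m i × k i) (Σ i, m i × k i) ℂ} (hρ : ρ.PosDef) (hω : ω.PosDef) :
    relEnt ρ (decohered τ ρ) =
      relEnt ρ (decohered τ ω) - relEnt (decohered τ ρ) (decohered τ ω) := by
  have hlog : mlog (decohered τ ρ) - mlog (decohered τ ω) = blockDiagonal' fun i ↦
      (mlog (blockPartialTrace ρ i) - mlog (blockPartialTrace ω i)) ⊗ₖ 1 := by
    rw [mlog_decohered hτ hρ, mlog_decohered hτ hω, ← blockDiagonal'_sub]
    congr 1
    ext i : 1
    ext
    simp [sub_mul]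
  refine relEnt_eq_sub_of_trace_mul_eq ?_
  simp_rw [hlog, trace_mul_blockDiagonal'_kronecker_one, blockPartialTrace_decohered hτtr]

end Decoherence

theorem relEnt_decohered_decomposition_general
    {ι : Type*} [Fintype ι] [DecidableEq ι]
    {m k : ι → Type*} [∀ i, Fintype (m i)] [∀ i, Fintype (k i)]
    [∀ i, Nonempty (k i)]
    [∀ i, DecidableEq (m i)] [∀ i, DecidableEq (k i)]
    (τ : ∀ i, Matrix (k i) (k i) ℂ)
    (hτ : ∀ i, (τ i).PosDef) (hτtr : ∀ i, Matrix.trace (τ i) = 1)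
    (ρ : Matrix (Σ i, (m i × k i)) (Σ i, (m i × k i)) ℂ)
    (hρ : ρ.PosDef) (hρtr : Matrix.trace ρ = 1) :
    ((decohered τ ρ).PosDef ∧ Matrix.trace (decohered τ ρ) = 1) ∧
    ((sigmaTr τ : Matrix (Σ i, (m i × k i)) (Σ i, (m i × k i)) ℂ).PosDef ∧
      Matrix.trace (sigmaTr τ : Matrix (Σ i, (m i × k i)) (Σ i, (m i × k i)) ℂ) = 1) ∧
    relEnt ρ (decohered τ ρ) = relEnt ρ (sigmaTr τ) - relEnt (decohered τ ρ) (sigmaTr τ) := by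
  have hcard : 0 < Fintype.card (Σ i, (m i × k i)) := by
    refine Fintype.card_pos_iff.2 (not_isEmpty_iff.1 fun _ ↦ ?_)
    simp [trace] at hρtr
  set mixed : Matrix (Σ i, (m i × k i)) (Σ i, (m i × k i)) ℂ :=
    (Fintype.card (Σ i, (m i × k i)) : ℝ)⁻¹ • 1
  have hmixed : mixed.PosDef := PosDef.one.smul (inv_pos.2 (Nat.cast_pos.2 hcard))
  have hmixed_tr : trace mixed = 1 := by
    rw [trace_smul, trace_one, Complex.real_smul, Complex.ofReal_inv, Complex.ofReal_natCast,
      inv_mul_cancel₀ (Nat.cast_ne_zero.2 hcard.ne')]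
  rw [sigmaTr_eq_decohered, trace_decohered hτtr, trace_decohered hτtr]
  exact ⟨⟨posDef_decohered hτ hρ, hρtr⟩, ⟨posDef_decohered hτ hmixed, hmixed_tr⟩,
    relEnt_decohered_eq_sub hτ hτtr hρ hmixed⟩

/-- **Lemma 2.9.** The decoherence-free relative entropy decomposes as
`D(ρ‖ρ_N) = D(ρ‖σ_Tr) − D(ρ_N‖σ_Tr)`. -/
theorem relEnt_decohered_decomposition
    {ι : Type*} [Fintype ι] [DecidableEq ι]
    {m k : ι → Type*} [∀ i, Fintype (m i)] [∀ i, Fintype (k i)]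
    [∀ i, Nonempty (m i)] [∀ i, Nonempty (k i)]
    [∀ i, DecidableEq (m i)] [∀ i, DecidableEq (k i)]
    (τ : ∀ i, Matrix (k i) (k i) ℂ)
    (hτ : ∀ i, (τ i).PosDef) (hτtr : ∀ i, Matrix.trace (τ i) = 1)
    (ρ : Matrix (Σ i, (m i × k i)) (Σ i, (m i × k i)) ℂ)
    (hρ : ρ.PosDef) (hρtr : Matrix.trace ρ = 1) :
    ((decohered τ ρ).PosDef ∧ Matrix.trace (decohered τ ρ) = 1) ∧
    ((sigmaTr τ : Matrix (Σ i, (m i × k i)) (Σ i, (m i × k i)) ℂ).PosDef ∧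
      Matrix.trace (sigmaTr τ : Matrix (Σ i, (m i × k i)) (Σ i, (m i × k i)) ℂ) = 1) ∧
    relEnt ρ (decohered τ ρ) = relEnt ρ (sigmaTr τ) - relEnt (decohered τ ρ) (sigmaTr τ) :=
  relEnt_decohered_decomposition_general τ hτ hτtr ρ hρ hρtr
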